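/- arXiv:2012.14043 — 6 statements merged into one kernel-verified Lean document; each statement's English description precedes it below -/
import Mathlib

section
/- Let D ⊆ ℝ^m be a closed convex set, and suppose a sequence of vectors u₁, u₂, ... ∈ ℝ^m is uniformly bounded by M (‖u_k‖ ≤ M) and satisfies the Blackwell condition: for every k with ū_k ∉ D, ⟨u_{k+1} - P_D(ū_k), ū_k - P_D(ū_k)⟩ ≤ 0, where ū_k = (1/k)∑_{i=1}^k u_i. Then d(ū_k, D)² ≤ 4M²/k for all k ≥ 1, and in particular d(ū_k, D) → 0. -/
open Finset Filter Metric Topology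
open scoped RealInnerProductSpace

/-!
Write `dₖ = d(ūₖ, D)` and `p = P_D(ūₖ)`. Since `(k+1) ūₖ₊₁ = k ūₖ + uₖ₊₁`, we have
`(k+1)(ūₖ₊₁ - p) = k (ūₖ - p) + (uₖ₊₁ - p)`; expanding the square, the Blackwell condition
kills the cross term and leaves `(k+1)² dₖ₊₁² ≤ k² dₖ² + ‖uₖ₊₁ - ūₖ‖² ≤ k² dₖ² + 4M²`.
The Blackwell condition at `k = 1` also gives the start `d₁ ≤ ‖u₂ - ū₁‖ ≤ 2M`, so
`k² dₖ² ≤ 4M² k`.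
-/

section RunningAverage

variable {E : Type*} [NormedAddCommGroup E] [NormedSpace ℝ E]

/-- The paper's `ūₖ`; at `k = 0` it is `0`. -/
noncomputable def runningAvg (u : ℕ → E) (k : ℕ) : E :=
  (k : ℝ)⁻¹ • ∑ i ∈ range k, u (i + 1)

lemma natCast_smul_runningAvg (u : ℕ → E) (k : ℕ) :
    (k : ℝ) • runningAvg u k = ∑ i ∈ range k, u (i + 1) := by
  rcases k.eq_zero_or_pos with rfl | hk
  · simp
  · exact smul_inv_smul₀ (by positivity) _

lemma succ_smul_runningAvg_succ (u : ℕ → E) (k : ℕ) :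
    ((k : ℝ) + 1) • runningAvg u (k + 1) = (k : ℝ) • runningAvg u k + u (k + 1) := by
  rw [natCast_smul_runningAvg, ← sum_range_succ, ← natCast_smul_runningAvg]
  push_cast
  rfl

lemma norm_runningAvg_le {u : ℕ → E} {M : ℝ} (hM : ∀ k, ‖u k‖ ≤ M) (k : ℕ) :
    ‖runningAvg u k‖ ≤ M := by
  rcases k.eq_zero_or_pos with rfl | hk
  · simpa [runningAvg] using (norm_nonneg _).trans (hM 0)
  · have hsum : ‖∑ i ∈ range k, u (i + 1)‖ ≤ k * M := by
      simpa using norm_sum_le_of_le (range k) fun i _ => hM (i + 1)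
    rw [runningAvg, norm_smul, norm_inv, RCLike.norm_natCast, inv_mul_le_iff₀ (by positivity)]
    exact hsum

end RunningAverage

lemma infDist_eq_dist_proj {X : Type*} [PseudoMetricSpace X] {D : Set X} {proj : X → X}
    (hprojD : ∀ z, proj z ∈ D) (hproj : ∀ z, ∀ w ∈ D, dist z (proj z) ≤ dist z w) (z : X) :
    infDist z D = dist z (proj z) :=
  le_antisymm (infDist_le_dist_of_mem (hprojD z)) ((le_infDist ⟨_, hprojD z⟩).2 (hproj z))

section InnerProduct

variable {E : Type*} [NormedAddCommGroup E] [InnerProductSpace ℝ E]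

lemma norm_smul_add_sq_add_norm_sq_le_of_inner_nonpos {a b : E} {t : ℝ} (ht : -1 ≤ t)
    (hab : ⟪b, a⟫ ≤ 0) : ‖t • a + b‖ ^ 2 + ‖a‖ ^ 2 ≤ t ^ 2 * ‖a‖ ^ 2 + ‖b - a‖ ^ 2 := by
  rw [norm_add_sq_real, norm_sub_sq_real, norm_smul, Real.norm_eq_abs, mul_pow, sq_abs,
    real_inner_smul_left, real_inner_comm]
  nlinarith [mul_nonneg (neg_le_iff_add_nonneg.mp ht) (neg_nonneg.mpr hab)]

variable {D : Set E} {proj : E → E}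

lemma inner_sub_proj_nonpos_of_mem (hproj : ∀ z, ∀ w ∈ D, dist z (proj z) ≤ dist z w)
    {x : E} (hx : x ∈ D) (v : E) : ⟪v - proj x, x - proj x⟫ ≤ 0 := by
  have hdist : dist x (proj x) = 0 :=
    le_antisymm ((hproj x x hx).trans_eq (dist_self x)) dist_nonneg
  rw [dist_eq_norm, norm_eq_zero] at hdist
  simp [hdist]

lemma infDist_le_norm_sub_of_inner_nonpos (hprojD : ∀ z, proj z ∈ D)
    (hproj : ∀ z, ∀ w ∈ D, dist z (proj z) ≤ dist z w) {x v : E}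
    (hB : ⟪v - proj x, x - proj x⟫ ≤ 0) : infDist x D ≤ ‖v - x‖ := by
  have h := norm_smul_add_sq_add_norm_sq_le_of_inner_nonpos (t := 0) (by norm_num) hB
  rw [sub_sub_sub_cancel_right, zero_smul, zero_add] at h
  rw [infDist_eq_dist_proj hprojD hproj, dist_eq_norm]
  nlinarith [norm_nonneg (x - proj x), norm_nonneg (v - x), sq_nonneg ‖v - proj x‖]

lemma sq_add_one_mul_infDist_le (hprojD : ∀ z, proj z ∈ D)
    (hproj : ∀ z, ∀ w ∈ D, dist z (proj z) ≤ dist z w) {x v y : E} {t : ℝ} (ht : 0 ≤ t)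
    (hy : (t + 1) • y = t • x + v) (hB : ⟪v - proj x, x - proj x⟫ ≤ 0) :
    ((t + 1) * infDist y D) ^ 2 ≤ (t * infDist x D) ^ 2 + ‖v - x‖ ^ 2 := by
  set p := proj x
  have hy_sub : (t + 1) • (y - p) = t • (x - p) + (v - p) := by
    rw [smul_sub, hy, add_smul, one_smul, smul_sub]
    abel
  have hy_dist : (t + 1) * infDist y D ≤ ‖t • (x - p) + (v - p)‖ := by
    rw [← hy_sub, norm_smul, Real.norm_of_nonneg (by linarith), ← dist_eq_norm]
    exact mul_le_mul_of_nonneg_left (infDist_le_dist_of_mem (hprojD x)) (by linarith)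
  have h := norm_smul_add_sq_add_norm_sq_le_of_inner_nonpos (by linarith : -1 ≤ t) hB
  rw [sub_sub_sub_cancel_right] at h
  rw [mul_pow, infDist_eq_dist_proj hprojD hproj x, dist_eq_norm]
  have hy_dist_sq := pow_le_pow_left₀ (mul_nonneg (by linarith) infDist_nonneg) hy_dist 2
  nlinarith [sq_nonneg ‖x - p‖]

end InnerProduct

lemma sq_le_div_of_sq_succ_mul_le {d : ℕ → ℝ} {C : ℝ}
    (h : ∀ k : ℕ, ((k + 1 : ℕ) * d (k + 1)) ^ 2 ≤ (k * d k) ^ 2 + C) {k : ℕ} (hk : 1 ≤ k) :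
    d k ^ 2 ≤ C / k := by
  have hlin : ∀ n : ℕ, (n * d n) ^ 2 ≤ n * C := by
    intro n
    induction n with
    | zero => simp
    | succ n ih => push_cast at h ⊢; linarith [h n]
  have hk' : (1 : ℝ) ≤ k := by exact_mod_cast hk
  rw [le_div_iff₀ (by positivity)]
  nlinarith [hlin k, sq_nonneg (d k)]

lemma tendsto_zero_of_sq_le_div {d : ℕ → ℝ} {C : ℝ} (hd : ∀ k, 0 ≤ d k)
    (h : ∀ k ≥ 1, d k ^ 2 ≤ C / k) : Tendsto d atTop (𝓝 0) := by
  have hsq : Tendsto (fun k => d k ^ 2) atTop (𝓝 0) :=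
    squeeze_zero' (Eventually.of_forall fun _ => sq_nonneg _)
      ((eventually_ge_atTop 1).mono h) (tendsto_const_div_atTop_nhds_zero_nat C)
  simpa [Real.sqrt_sq (hd _)] using hsq.sqrt

theorem stmt_3_general {m : ℕ} (D : Set (EuclideanSpace ℝ (Fin m)))
    (proj : EuclideanSpace ℝ (Fin m) → EuclideanSpace ℝ (Fin m))
    (hprojD : ∀ z, proj z ∈ D)
    (hproj : ∀ z, ∀ w ∈ D, dist z (proj z) ≤ dist z w)
    (u : ℕ → EuclideanSpace ℝ (Fin m)) (M : ℝ)
    (hM : ∀ k, ‖u k‖ ≤ M)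
    (ubar : ℕ → EuclideanSpace ℝ (Fin m))
    (hubar : ∀ k, ubar k = (k : ℝ)⁻¹ • ∑ i ∈ Finset.range k, u (i + 1))
    (hBlackwell : ∀ k ≥ 1, ubar k ∉ D →
      (inner ℝ (u (k + 1) - proj (ubar k)) (ubar k - proj (ubar k)) : ℝ) ≤ 0) :
    (∀ k ≥ 1, (Metric.infDist (ubar k) D) ^ 2 ≤ 4 * M ^ 2 / k) ∧
    Tendsto (fun k => Metric.infDist (ubar k) D) atTop (nhds 0) := by
  obtain rfl : ubar = runningAvg u := funext hubar
  have hB : ∀ k ≥ 1, ⟪u (k + 1) - proj (runningAvg u k), runningAvg u k - proj (runningAvg u k)⟫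
      ≤ 0 := fun k hk => by
    by_cases h : runningAvg u k ∈ D
    exacts [inner_sub_proj_nonpos_of_mem hproj h _, hBlackwell k hk h]
  have hgap : ∀ k, ‖u (k + 1) - runningAvg u k‖ ^ 2 ≤ 4 * M ^ 2 := fun k => by
    have h := (norm_sub_le _ _).trans (add_le_add (hM (k + 1)) (norm_runningAvg_le hM k))
    nlinarith [norm_nonneg (u (k + 1) - runningAvg u k)]
  have hstep : ∀ k : ℕ, ((k + 1 : ℕ) * infDist (runningAvg u (k + 1)) D) ^ 2
      ≤ (k * infDist (runningAvg u k) D) ^ 2 + 4 * M ^ 2 := by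
    rintro (_ | k)
    · have h := infDist_le_norm_sub_of_inner_nonpos hprojD hproj (hB 1 le_rfl)
      simpa using (pow_le_pow_left₀ infDist_nonneg h 2).trans (hgap 1)
    · rw [Nat.cast_succ (k + 1)]
      exact (sq_add_one_mul_infDist_le hprojD hproj (by positivity)
        (succ_smul_runningAvg_succ u (k + 1)) (hB (k + 1) (by omega))).trans
        (add_le_add_right (hgap (k + 1)) _)
  have hbound : ∀ k ≥ 1, infDist (runningAvg u k) D ^ 2 ≤ 4 * M ^ 2 / k :=
    fun _ => sq_le_div_of_sq_succ_mul_le (d := fun k => infDist (runningAvg u k) D) hstep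
  exact ⟨hbound, tendsto_zero_of_sq_le_div (fun _ => infDist_nonneg) hbound⟩

/-- Quantitative core of Blackwell's approachability theorem: if the payoffs are bounded
by `M` and satisfy the Blackwell condition with respect to the closed convex target `D`,
then the squared distance of the running average to `D` decays like `4M²/k`. -/
theorem stmt_3 {m : ℕ} (D : Set (EuclideanSpace ℝ (Fin m)))
    (hDclosed : IsClosed D) (hDconvex : Convex ℝ D)
    (proj : EuclideanSpace ℝ (Fin m) → EuclideanSpace ℝ (Fin m))
    (hprojD : ∀ z, proj z ∈ D)
    (hproj : ∀ z, ∀ w ∈ D, dist z (proj z) ≤ dist z w)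
    (u : ℕ → EuclideanSpace ℝ (Fin m)) (M : ℝ)
    (hM : ∀ k, ‖u k‖ ≤ M)
    (ubar : ℕ → EuclideanSpace ℝ (Fin m))
    (hubar : ∀ k, ubar k = (k : ℝ)⁻¹ • ∑ i ∈ Finset.range k, u (i + 1))
    (hBlackwell : ∀ k ≥ 1, ubar k ∉ D →
      (inner ℝ (u (k + 1) - proj (ubar k)) (ubar k - proj (ubar k)) : ℝ) ≤ 0) :
    (∀ k ≥ 1, (Metric.infDist (ubar k) D) ^ 2 ≤ 4 * M ^ 2 / k) ∧
    Tendsto (fun k => Metric.infDist (ubar k) D) atTop (nhds 0) :=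
  stmt_3_general D proj hprojD hproj u M hM ubar hubar hBlackwell
end

section
/- Let D ⊆ ℝ^m be a closed convex set approachable by Player 1 in the Blackwell game ⟨X, Y, u, D⟩ (with X, Y compact convex and u bi-affine). Then every closed halfspace H containing D is approachable, i.e., there exists x* ∈ X such that u(x*, y) ∈ H for all y ∈ Y. -/
/-!
If no `x ∈ X` keeps `⟪a, u x ·⟫ ≤ b` on `Y`, every `x` has a reply `y ∈ Y` with
`⟪a, u x y⟫ > b`; since `u` is continuous in `x` and `X` is compact, the excess over `b` is
uniformly at least some `ε > 0`. If Player 2 always answers this way, every average payoff `z`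
satisfies `⟪a, z⟫ ≥ b + ε`, so `ε ≤ ‖a‖ · infDist z D` because `D` lies in the halfspace, and the
averages cannot approach `D`.
-/

open Finset Filter

variable {E : Type*} [NormedAddCommGroup E] [InnerProductSpace ℝ E]

theorem continuous_of_map_smul_add_one_sub_smul [FiniteDimensional ℝ E] {g : E → ℝ}
    (hg : ∀ (t : ℝ) x₁ x₂, g (t • x₁ + (1 - t) • x₂) = t * g x₁ + (1 - t) * g x₂) :
    Continuous g := by
  have hconv : ConvexOn ℝ Set.univ g := by
    refine ⟨convex_univ, fun x₁ _ x₂ _ s t _ _ hst => ?_⟩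
    obtain rfl : t = 1 - s := eq_sub_of_add_eq' hst
    rw [hg, smul_eq_mul, smul_eq_mul]
  exact continuousOn_univ.mp (hconv.continuousOn isOpen_univ)

/-- The open sets `{x | ∃ y ∈ Y, b + 1/(n+1) < f x y}` increase with `n` and cover `K`, so one
of them already covers it. -/
theorem IsCompact.exists_pos_forall_exists_add_le {α β : Type*} [TopologicalSpace α]
    {K : Set α} (hK : IsCompact K) {Y : Set β} {f : α → β → ℝ}
    (hf : ∀ y, Continuous (f · y)) {b : ℝ} (h : ∀ x ∈ K, ∃ y ∈ Y, b < f x y) :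
    ∃ ε > 0, ∀ x ∈ K, ∃ y ∈ Y, b + ε ≤ f x y := by
  let U : ℕ → Set α := fun n => ⋃ y ∈ Y, {x | b + ((n : ℝ) + 1)⁻¹ < f x y}
  have hUopen : ∀ n, IsOpen (U n) := fun n =>
    isOpen_biUnion fun y _ => isOpen_lt continuous_const (hf y)
  have hUmono : Monotone U := fun m n hmn => Set.biUnion_mono subset_rfl fun y _ x hx => by
    refine lt_of_le_of_lt (add_le_add_right ?_ b) hx
    gcongr
  have hcover : K ⊆ ⋃ n, U n := fun x hx => by
    obtain ⟨y, hy, hxy⟩ := h x hx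
    obtain ⟨n, hn⟩ := exists_nat_one_div_lt (sub_pos.mpr hxy)
    rw [one_div] at hn
    exact Set.mem_iUnion.mpr ⟨n, Set.mem_iUnion₂.mpr ⟨y, hy, show b + _ < f x y by linarith⟩⟩
  obtain ⟨n, hn⟩ := hK.elim_directed_cover U hUopen hcover hUmono.directed_le
  refine ⟨((n : ℝ) + 1)⁻¹, by positivity, fun x hx => ?_⟩
  obtain ⟨y, hy, hxy⟩ := Set.mem_iUnion₂.mp (hn hx)
  exact ⟨y, hy, hxy.le⟩

theorem le_inner_average {a : E} {c : ℝ} {z : ℕ → E} {K : ℕ} (hK : K ≠ 0)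
    (hz : ∀ i, c ≤ inner ℝ a (z i)) :
    c ≤ inner ℝ a ((K : ℝ)⁻¹ • ∑ i ∈ range K, z i) := by
  rw [real_inner_smul_right, inner_sum, le_inv_mul_iff₀ (by positivity)]
  simpa using card_nsmul_le_sum (range K) _ c fun i _ => hz i

theorem inner_sub_le_norm_mul_infDist {D : Set E} (hD : D.Nonempty) {a : E} {b : ℝ}
    (hDH : D ⊆ {w | inner ℝ a w ≤ b}) (z : E) :
    inner ℝ a z - b ≤ ‖a‖ * Metric.infDist z D := by
  have : Nonempty D := hD.to_subtype
  rw [Metric.infDist_eq_iInf, Real.mul_iInf_of_nonneg (norm_nonneg a)]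
  refine le_ciInf fun ⟨w, hw⟩ => ?_
  calc inner ℝ a z - b ≤ inner ℝ a (z - w) := by
        rw [inner_sub_right]; linarith [show inner ℝ a w ≤ b from hDH hw]
    _ ≤ ‖a‖ * ‖z - w‖ := real_inner_le_norm a (z - w)
    _ = ‖a‖ * dist z w := by rw [dist_eq_norm]

noncomputable def playAgainst {α β : Type*} (σ : (k : ℕ) → (Fin k → α × β) → α)
    (r : α → β) : ℕ → α
  | k => σ k fun i => (playAgainst σ r i, r (playAgainst σ r i))
decreasing_by exact i.isLt

theorem playAgainst_eq {α β : Type*} (σ : (k : ℕ) → (Fin k → α × β) → α) (r : α → β)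
    (k : ℕ) : playAgainst σ r k = σ k fun i => (playAgainst σ r i, r (playAgainst σ r i)) := by
  rw [playAgainst]

theorem stmt_4_general {n m d : ℕ}
    (X : Set (EuclideanSpace ℝ (Fin n))) (Y : Set (EuclideanSpace ℝ (Fin m)))
    (hXcomp : IsCompact X)
    (u : EuclideanSpace ℝ (Fin n) → EuclideanSpace ℝ (Fin m) → EuclideanSpace ℝ (Fin d))
    (hu_affine_x : ∀ y, ∀ t : ℝ, ∀ x₁ x₂,
      u (t • x₁ + (1 - t) • x₂) y = t • u x₁ y + (1 - t) • u x₂ y)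
    (D : Set (EuclideanSpace ℝ (Fin d)))
    (hDne : D.Nonempty)
    -- `D` is approachable: there is a strategy `σ` mapping histories of play to actions
    -- in `X` such that, whatever Player 2 plays in `Y`, the average payoff converges to `D`.
    (happr : ∃ σ : (k : ℕ) →
        (Fin k → EuclideanSpace ℝ (Fin n) × EuclideanSpace ℝ (Fin m)) →
        EuclideanSpace ℝ (Fin n),
      (∀ k h, σ k h ∈ X) ∧
      ∀ (x : ℕ → EuclideanSpace ℝ (Fin n)) (y : ℕ → EuclideanSpace ℝ (Fin m)),
        (∀ k, y k ∈ Y) →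
        (∀ k, x k = σ k (fun i => (x i, y i))) →
        Tendsto (fun K : ℕ =>
            Metric.infDist ((K : ℝ)⁻¹ • ∑ i ∈ Finset.range K, u (x i) (y i)) D)
          atTop (nhds 0))
    -- a closed halfspace containing `D`
    (a : EuclideanSpace ℝ (Fin d)) (b : ℝ)
    (hDH : D ⊆ {z | (inner ℝ a z : ℝ) ≤ b}) :
    ∃ xstar ∈ X, ∀ y ∈ Y, (inner ℝ a (u xstar y) : ℝ) ≤ b := by
  obtain ⟨σ, hσX, hσ⟩ := happr
  by_contra! hbad
  have hcont : ∀ y, Continuous fun x => inner ℝ a (u x y) := fun y =>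
    continuous_of_map_smul_add_one_sub_smul fun t x₁ x₂ => by
      rw [hu_affine_x, inner_add_right, real_inner_smul_right, real_inner_smul_right]
  obtain ⟨ε, hε, hresp⟩ := hXcomp.exists_pos_forall_exists_add_le hcont hbad
  choose! r hrY hr using hresp
  have hxX : ∀ k, playAgainst σ r k ∈ X := fun k => by rw [playAgainst_eq]; exact hσX _ _
  set x := playAgainst σ r
  have hlim := hσ x (r ∘ x) (fun k => hrY _ (hxX k)) (playAgainst_eq σ r)
  have hgap : ∀ K : ℕ, K ≠ 0 → ε ≤ ‖a‖ * Metric.infDist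
      ((K : ℝ)⁻¹ • ∑ i ∈ range K, u (x i) ((r ∘ x) i)) D := fun K hK =>
    le_trans (le_sub_iff_add_le'.mpr (le_inner_average hK fun i => hr _ (hxX i)))
      (inner_sub_le_norm_mul_infDist hDne hDH _)
  have := ge_of_tendsto (hlim.const_mul ‖a‖) ((eventually_ne_atTop 0).mono hgap)
  rw [mul_zero] at this
  linarith

/-- Necessity direction of Blackwell's theorem: if the closed convex target `D` is
approachable in the Blackwell game `⟨X, Y, u, D⟩`, then every closed halfspace
containing `D` is approachable (in one step). -/
theorem stmt_4 {n m d : ℕ}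
    (X : Set (EuclideanSpace ℝ (Fin n))) (Y : Set (EuclideanSpace ℝ (Fin m)))
    (hXcomp : IsCompact X) (hXconv : Convex ℝ X) (hXne : X.Nonempty)
    (hYcomp : IsCompact Y) (hYconv : Convex ℝ Y) (hYne : Y.Nonempty)
    (u : EuclideanSpace ℝ (Fin n) → EuclideanSpace ℝ (Fin m) → EuclideanSpace ℝ (Fin d))
    (hu_affine_x : ∀ y, ∀ t : ℝ, ∀ x₁ x₂,
      u (t • x₁ + (1 - t) • x₂) y = t • u x₁ y + (1 - t) • u x₂ y)
    (hu_affine_y : ∀ x, ∀ t : ℝ, ∀ y₁ y₂,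
      u x (t • y₁ + (1 - t) • y₂) = t • u x y₁ + (1 - t) • u x y₂)
    (D : Set (EuclideanSpace ℝ (Fin d)))
    (hDclosed : IsClosed D) (hDconv : Convex ℝ D) (hDne : D.Nonempty)
    -- `D` is approachable: there is a strategy `σ` mapping histories of play to actions
    -- in `X` such that, whatever Player 2 plays in `Y`, the average payoff converges to `D`.
    (happr : ∃ σ : (k : ℕ) →
        (Fin k → EuclideanSpace ℝ (Fin n) × EuclideanSpace ℝ (Fin m)) →
        EuclideanSpace ℝ (Fin n),
      (∀ k h, σ k h ∈ X) ∧
      ∀ (x : ℕ → EuclideanSpace ℝ (Fin n)) (y : ℕ → EuclideanSpace ℝ (Fin m)),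
        (∀ k, y k ∈ Y) →
        (∀ k, x k = σ k (fun i => (x i, y i))) →
        Tendsto (fun K : ℕ =>
            Metric.infDist ((K : ℝ)⁻¹ • ∑ i ∈ Finset.range K, u (x i) (y i)) D)
          atTop (nhds 0))
    -- a closed halfspace containing `D`
    (a : EuclideanSpace ℝ (Fin d)) (b : ℝ)
    (hDH : D ⊆ {z | (inner ℝ a z : ℝ) ≤ b}) :
    ∃ xstar ∈ X, ∀ y ∈ Y, (inner ℝ a (u xstar y) : ℝ) ≤ b :=
  stmt_4_general X Y hXcomp u hu_affine_x D hDne happr a b hDH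
end

section
/- Let T^π be the expected-SARSA operator of a finite discounted MDP with discount γ ∈ (0,1), and let Ω^η be the set of diagonal S×A matrices with diagonal entries in [η, 1] for some η ∈ (0,1). Then for any fixed policy π, Q^π is a globally asymptotically stable equilibrium of the differential inclusion dQ_t/dt ∈ {M(T^π Q_t - Q_t) : M ∈ Ω^η}: every absolutely continuous solution Q_t satisfies ‖Q_t - Q^π‖_∞ ≤ e^{-η(1-γ)t}‖Q_0 - Q^π‖_∞. -/
open Finset Filter Topology Set

/-! Put `X_t = Q_t - Q^π`, a vector indexed by `S × A` with the sup norm. An Euler step of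
length `h ≤ 1` replaces each coordinate `X_t(s,a)` by the convex combination
`(1 - hω) X_t(s,a) + hω (T^π Q_t - T^π Q^π)(s,a)` with `ω ∈ [η, 1]`, and `T^π` is a
`γ`-contraction in the sup norm, so `‖X_t + h Ẋ_t‖ ≤ (1 - hη(1-γ)) ‖X_t‖`. Hence the right Dini
derivative of `‖X_t‖` is at most `-η(1-γ) ‖X_t‖`, and Grönwall's inequality gives the decay. -/

theorem iSup_abs_eq_pi_norm {ι : Type*} [Fintype ι] (f : ι → ℝ) : ⨆ i, |f i| = ‖f‖ := by
  cases isEmpty_or_nonempty ι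
  · simp [Subsingleton.elim f 0]
  · refine le_antisymm (ciSup_le fun i => norm_le_pi_norm f i) ?_
    exact (pi_norm_le_iff_of_nonempty _).2 fun i =>
      le_ciSup (Finite.bddAbove_range fun i => |f i|) i

theorem tendsto_sub_nhdsGT_zero (x : ℝ) : Tendsto (fun z => z - x) (𝓝[>] x) (𝓝[>] 0) := by
  refine tendsto_nhdsWithin_iff.2 ⟨?_, ?_⟩
  · exact ((continuous_sub_right x).tendsto' x 0 (sub_self x)).mono_left nhdsWithin_le_nhds
  · filter_upwards [self_mem_nhdsWithin] with z (hz : x < z)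
    exact sub_pos.2 hz

theorem eventually_slope_norm_lt_of_norm_add_smul_le {E : Type*} [NormedAddCommGroup E]
    [NormedSpace ℝ E] {f : ℝ → E} {f' : E} {c x r : ℝ}
    (hf : HasDerivWithinAt f f' (Ici x) x)
    (hstep : ∀ᶠ h in 𝓝[>] 0, ‖f x + h • f'‖ ≤ (1 - c * h) * ‖f x‖) (hr : -c * ‖f x‖ < r) :
    ∀ᶠ z in 𝓝[>] x, (z - x)⁻¹ * (‖f z‖ - ‖f x‖) < r := by
  obtain ⟨ε, hε, rfl⟩ : ∃ ε, 0 < ε ∧ r = ε - c * ‖f x‖ := ⟨r + c * ‖f x‖, by linarith, by ring⟩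
  have hlo := (hf.mono Ioi_subset_Ici_self).isLittleO.def (half_pos hε)
  filter_upwards [hlo, tendsto_sub_nhdsGT_zero x hstep, self_mem_nhdsWithin]
    with z hz hzstep (hxz : x < z)
  have hpos : 0 < z - x := sub_pos.2 hxz
  rw [Real.norm_of_nonneg hpos.le] at hz
  have : ‖f z‖ ≤ (1 - c * (z - x)) * ‖f x‖ + ε / 2 * (z - x) :=
    calc ‖f z‖ ≤ ‖f x + (z - x) • f'‖ + ‖f z - f x - (z - x) • f'‖ :=
          by simpa only [sub_sub] using norm_le_norm_add_norm_sub' (f z) (f x + (z - x) • f')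
      _ ≤ _ := add_le_add hzstep hz
  rw [inv_mul_lt_iff₀ hpos]
  nlinarith [mul_pos hpos hε]

theorem norm_le_exp_mul_norm_of_norm_add_smul_le {E : Type*} [NormedAddCommGroup E]
    [NormedSpace ℝ E] {f f' : ℝ → E} {c a b : ℝ} (hab : a ≤ b)
    (hf : ContinuousOn f (Icc a b))
    (hf' : ∀ x ∈ Ico a b, HasDerivWithinAt f (f' x) (Ici x) x)
    (hstep : ∀ x ∈ Ico a b, ∀ᶠ h in 𝓝[>] 0, ‖f x + h • f' x‖ ≤ (1 - c * h) * ‖f x‖) :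
    ‖f b‖ ≤ Real.exp (-c * (b - a)) * ‖f a‖ := by
  have := le_gronwallBound_of_liminf_deriv_right_le (f := fun x => ‖f x‖) (K := -c) (ε := 0)
    hf.norm (fun x hx r hr => (eventually_slope_norm_lt_of_norm_add_smul_le (hf' x hx)
      (hstep x hx) hr).frequently) le_rfl (fun x _ => by simp) b ⟨hab, le_rfl⟩
  rwa [gronwallBound_ε0, mul_comm] at this

theorem abs_sum_mul_le_of_stochastic {ι : Type*} [Fintype ι] {w x : ι → ℝ} {M : ℝ}
    (hw0 : ∀ i, 0 ≤ w i) (hw1 : ∑ i, w i = 1) (hx : ∀ i, |x i| ≤ M) :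
    |∑ i, w i * x i| ≤ M :=
  calc |∑ i, w i * x i| ≤ ∑ i, w i * |x i| := by
        simpa only [abs_mul, abs_of_nonneg (hw0 _)] using
          abs_sum_le_sum_abs (fun i => w i * x i) univ
    _ ≤ ∑ i, w i * M := sum_le_sum fun i _ => mul_le_mul_of_nonneg_left (hx i) (hw0 i)
    _ = M := by rw [← sum_mul, hw1, one_mul]

section ExpectedSarsa

variable {S A : Type*} [Fintype S] [Fintype A]

def expectedSarsa (P : S → A → S → ℝ) (r : S → A → ℝ) (γ : ℝ) (π : S → A → ℝ)
    (Q : S → A → ℝ) : S → A → ℝ :=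
  fun s a => r s a + γ * ∑ s', P s a s' * ∑ a', π s' a' * Q s' a'

theorem abs_expectedSarsa_sub_le {P : S → A → S → ℝ} {r : S → A → ℝ} {π : S → A → ℝ} {γ M : ℝ}
    (hPnn : ∀ s a s', 0 ≤ P s a s') (hPsum : ∀ s a, ∑ s', P s a s' = 1)
    (hπnn : ∀ s a, 0 ≤ π s a) (hπsum : ∀ s, ∑ a, π s a = 1) (hγ : 0 ≤ γ)
    {Q Q' : S → A → ℝ} (hQ : ∀ s a, |Q s a - Q' s a| ≤ M) (s : S) (a : A) :
    |expectedSarsa P r γ π Q s a - expectedSarsa P r γ π Q' s a| ≤ γ * M := by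
  have hdiff : expectedSarsa P r γ π Q s a - expectedSarsa P r γ π Q' s a =
      γ * ∑ s', P s a s' * ∑ a', π s' a' * (Q s' a' - Q' s' a') := by
    simp only [expectedSarsa, mul_sub, sum_sub_distrib]
    ring
  rw [hdiff, abs_mul, abs_of_nonneg hγ]
  exact mul_le_mul_of_nonneg_left (abs_sum_mul_le_of_stochastic (hPnn s a) (hPsum s a)
    fun s' => abs_sum_mul_le_of_stochastic (hπnn s') (hπsum s') (hQ s')) hγ

end ExpectedSarsa

theorem norm_add_smul_mul_sub_le {ι : Type*} [Fintype ι] {x e ω : ι → ℝ} {γ η h : ℝ}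
    (hγ : γ ≤ 1) (hη : 0 ≤ η) (hω : ∀ i, ω i ∈ Set.Icc η 1)
    (he : ∀ i, |e i| ≤ γ * ‖x‖) (hh : h ∈ Set.Icc 0 1) :
    ‖x + h • (ω * (e - x))‖ ≤ (1 - η * (1 - γ) * h) * ‖x‖ := by
  cases isEmpty_or_nonempty ι
  · rw [Subsingleton.elim x 0, Subsingleton.elim (0 + _) 0]
    simp
  refine (pi_norm_le_iff_of_nonempty _).2 fun i => ?_
  obtain ⟨hηω, hω1⟩ := hω i
  have hhω : 0 ≤ h * ω i := mul_nonneg hh.1 (hη.trans hηω)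
  have hhω1 : h * ω i ≤ 1 := mul_le_one₀ hh.2 (hη.trans hηω) hω1
  have hx : |x i| ≤ ‖x‖ := norm_le_pi_norm x i
  calc ‖(x + h • (ω * (e - x))) i‖ = |(1 - h * ω i) * x i + h * ω i * e i| := by
        simp only [Real.norm_eq_abs, Pi.add_apply, Pi.smul_apply, Pi.mul_apply, Pi.sub_apply,
          smul_eq_mul]
        ring_nf
    _ ≤ (1 - h * ω i) * |x i| + h * ω i * |e i| := by
        refine (abs_add_le _ _).trans_eq ?_
        rw [abs_mul, abs_mul, abs_of_nonneg (sub_nonneg.2 hhω1), abs_of_nonneg hhω]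
    _ ≤ (1 - h * ω i) * ‖x‖ + h * ω i * (γ * ‖x‖) :=
        add_le_add (mul_le_mul_of_nonneg_left hx (by linarith))
          (mul_le_mul_of_nonneg_left (he i) hhω)
    _ = (1 - (1 - γ) * (h * ω i)) * ‖x‖ := by ring
    _ ≤ (1 - η * (1 - γ) * h) * ‖x‖ := by
        refine mul_le_mul_of_nonneg_right ?_ (norm_nonneg x)
        nlinarith [mul_le_mul_of_nonneg_left hηω hh.1]

theorem stmt_8_general {S A : Type*} [Fintype S] [Fintype A]
    (P : S → A → S → ℝ) (r : S → A → ℝ) (γ : ℝ)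
    (hγ0 : 0 < γ) (hγ1 : γ < 1)
    (hPnn : ∀ s a s', 0 ≤ P s a s') (hPsum : ∀ s a, ∑ s', P s a s' = 1)
    (π : S → A → ℝ)
    (hπnn : ∀ s a, 0 ≤ π s a) (hπsum : ∀ s, ∑ a, π s a = 1)
    (Tπ : (S → A → ℝ) → (S → A → ℝ))
    (hTπ : ∀ Q s a, Tπ Q s a = r s a + γ * ∑ s', P s a s' * ∑ a', π s' a' * Q s' a')
    (Qπ : S → A → ℝ) (hQπ : Tπ Qπ = Qπ)
    (η : ℝ) (hη0 : 0 < η)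
    (Q : ℝ → S → A → ℝ)
    -- `Q` is a solution of the differential inclusion: at every time `t` the derivative
    -- equals `M (T^π Q_t - Q_t)` for some diagonal matrix `M ∈ Ω^η`.
    (hsol : ∀ t : ℝ, ∃ ω : S → A → ℝ,
      (∀ s a, ω s a ∈ Set.Icc η 1) ∧
      ∀ s a, HasDerivAt (fun τ => Q τ s a) (ω s a * (Tπ (Q t) s a - Q t s a)) t) :
    ∀ t : ℝ, 0 ≤ t →
      (⨆ p : S × A, |Q t p.1 p.2 - Qπ p.1 p.2|) ≤
        Real.exp (-η * (1 - γ) * t) * ⨆ p : S × A, |Q 0 p.1 p.2 - Qπ p.1 p.2| := by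
  intro t ht
  have hT : Tπ = expectedSarsa P r γ π := funext₃ hTπ
  choose ω hω hQ using hsol
  let X : ℝ → S × A → ℝ := fun τ p => Q τ p.1 p.2 - Qπ p.1 p.2
  have hX : ∀ τ, HasDerivAt X (fun p => ω τ p.1 p.2 * (Tπ (Q τ) p.1 p.2 - Q τ p.1 p.2)) τ :=
    fun τ => hasDerivAt_pi.2 fun p => (hQ τ p.1 p.2).sub_const _
  have hstep : ∀ τ, ∀ᶠ h in 𝓝[>] 0,
      ‖X τ + h • (fun p => ω τ p.1 p.2 * (Tπ (Q τ) p.1 p.2 - Q τ p.1 p.2))‖ ≤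
        (1 - η * (1 - γ) * h) * ‖X τ‖ := by
    intro τ
    filter_upwards [Ioc_mem_nhdsGT one_pos] with h hh
    have he : ∀ p : S × A, |Tπ (Q τ) p.1 p.2 - Qπ p.1 p.2| ≤ γ * ‖X τ‖ := fun p => by
      rw [← hQπ, hT]
      exact abs_expectedSarsa_sub_le hPnn hPsum hπnn hπsum hγ0.le
        (fun s a => norm_le_pi_norm (X τ) (s, a)) p.1 p.2
    convert norm_add_smul_mul_sub_le hγ1.le hη0.le (fun p => hω τ p.1 p.2) he
      (Ioc_subset_Icc_self hh) using 4
    funext p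
    simp only [X, Pi.mul_apply, Pi.sub_apply]
    ring
  have := norm_le_exp_mul_norm_of_norm_add_smul_le ht
    (continuous_iff_continuousAt.2 fun τ => (hX τ).continuousAt).continuousOn
    (fun τ _ => (hX τ).hasDerivWithinAt) (fun τ _ => hstep τ)
  simpa only [iSup_abs_eq_pi_norm, sub_zero, neg_mul] using this

/-- `Q^π` is a globally asymptotically stable equilibrium of the differential inclusion
`dQ/dt ∈ {M (T^π Q - Q) : M ∈ Ω^η}`: every solution satisfies
`‖Q_t - Q^π‖_∞ ≤ exp (-η (1-γ) t) ‖Q_0 - Q^π‖_∞`. -/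
theorem stmt_8 {S A : Type*} [Fintype S] [Fintype A] [Nonempty S] [Nonempty A]
    (P : S → A → S → ℝ) (r : S → A → ℝ) (γ : ℝ)
    (hγ0 : 0 < γ) (hγ1 : γ < 1)
    (hPnn : ∀ s a s', 0 ≤ P s a s') (hPsum : ∀ s a, ∑ s', P s a s' = 1)
    (π : S → A → ℝ)
    (hπnn : ∀ s a, 0 ≤ π s a) (hπsum : ∀ s, ∑ a, π s a = 1)
    (Tπ : (S → A → ℝ) → (S → A → ℝ))
    (hTπ : ∀ Q s a, Tπ Q s a = r s a + γ * ∑ s', P s a s' * ∑ a', π s' a' * Q s' a')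
    (Qπ : S → A → ℝ) (hQπ : Tπ Qπ = Qπ)
    (η : ℝ) (hη0 : 0 < η) (hη1 : η < 1)
    (Q : ℝ → S → A → ℝ)
    -- `Q` is a solution of the differential inclusion: at every time `t` the derivative
    -- equals `M (T^π Q_t - Q_t)` for some diagonal matrix `M ∈ Ω^η`.
    (hsol : ∀ t : ℝ, ∃ ω : S → A → ℝ,
      (∀ s a, ω s a ∈ Set.Icc η 1) ∧
      ∀ s a, HasDerivAt (fun τ => Q τ s a) (ω s a * (Tπ (Q t) s a - Q t s a)) t) :
    ∀ t : ℝ, 0 ≤ t →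
      (⨆ p : S × A, |Q t p.1 p.2 - Qπ p.1 p.2|) ≤
        Real.exp (-η * (1 - γ) * t) * ⨆ p : S × A, |Q 0 p.1 p.2 - Qπ p.1 p.2| :=
  stmt_8_general P r γ hγ0 hγ1 hPnn hPsum π hπnn hπsum Tπ hTπ Qπ hQπ η hη0 Q hsol
end

section
/- Performance-difference lemma: for a finite discounted MDP with γ ∈ (0,1) and any two policies π, π', V^{π'}(s₀) - V^{π}(s₀) = (1/(1-γ)) ∑_{s} d^{π'}_{s₀}(s) ∑_a (π'(s,a) - π(s,a)) Q^{π}(s,a), where d^{π'}_{s₀}(s) = (1-γ) ∑_{k=0}^∞ γ^k Pr(s_k = s | s_0 = s₀, π') is the discounted state-occupancy distribution of π' started at s₀. -/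
/-!
The difference `Δ = V^{π'} - V^π` satisfies the Bellman-type equation
`Δ = g + γ P_{π'} Δ`, where `g(s) = ⟨π'(s) - π(s), Q^π(s)⟩` and `P_{π'}` is the transition
matrix of the chain induced by `π'`. Unrolling it `n` times gives
`Δ(s₀) = ∑_{k<n} γ^k E_{s₀}[g(s_k)] + γ^n E_{s₀}[Δ(s_n)]`, and the remainder vanishes
since `Δ` is bounded and `γ < 1`. Exchanging the finite sum over states with the series
over time turns `∑_k γ^k E_{s₀}[g(s_k)]` into `∑_s d^{π'}_{s₀}(s) g(s) / (1 - γ)`.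
-/

open Finset

/-- `chainProb Pmat s₀ k s` is the probability that the Markov chain with transition
matrix `Pmat`, started at `s₀`, is in state `s` at time `k`. -/
def chainProb {S : Type*} [Fintype S] [DecidableEq S]
    (Pmat : S → S → ℝ) (s₀ : S) : ℕ → S → ℝ
  | 0 => fun s => if s = s₀ then 1 else 0
  | k + 1 => fun s => ∑ s', chainProb Pmat s₀ k s' * Pmat s' s

open Filter Topology

section MarkovChain

variable {S : Type*} [Fintype S] [DecidableEq S] {Pmat : S → S → ℝ} (s₀ : S)

theorem sum_chainProb_succ_mul (k : ℕ) (f : S → ℝ) :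
    ∑ s, chainProb Pmat s₀ (k + 1) s * f s =
      ∑ s, chainProb Pmat s₀ k s * ∑ s', Pmat s s' * f s' := by
  simp only [chainProb, sum_mul, mul_sum, mul_assoc]
  exact sum_comm

theorem chainProb_nonneg (hnn : ∀ s s', 0 ≤ Pmat s s') (k : ℕ) (s : S) :
    0 ≤ chainProb Pmat s₀ k s := by
  induction k generalizing s with
  | zero => simp only [chainProb]; split <;> norm_num
  | succ k ih => exact sum_nonneg fun s' _ => mul_nonneg (ih s') (hnn s' s)

theorem sum_chainProb (hrow : ∀ s, ∑ s', Pmat s s' = 1) (k : ℕ) :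
    ∑ s, chainProb Pmat s₀ k s = 1 := by
  induction k with
  | zero => simp [chainProb]
  | succ k ih =>
    simpa [hrow, ih] using sum_chainProb_succ_mul (Pmat := Pmat) s₀ k (fun _ => 1)

theorem chainProb_le_one (hnn : ∀ s s', 0 ≤ Pmat s s') (hrow : ∀ s, ∑ s', Pmat s s' = 1)
    (k : ℕ) (s : S) : chainProb Pmat s₀ k s ≤ 1 :=
  sum_chainProb s₀ hrow k ▸
    single_le_sum (fun t _ => chainProb_nonneg s₀ hnn k t) (mem_univ s)

theorem abs_sum_chainProb_mul_le (hnn : ∀ s s', 0 ≤ Pmat s s')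
    (hrow : ∀ s, ∑ s', Pmat s s' = 1) (k : ℕ) (f : S → ℝ) :
    |∑ s, chainProb Pmat s₀ k s * f s| ≤ ∑ s, |f s| := by
  refine (abs_sum_le_sum_abs _ _).trans (sum_le_sum fun s _ => ?_)
  rw [abs_mul, abs_of_nonneg (chainProb_nonneg s₀ hnn k s)]
  exact mul_le_of_le_one_left (abs_nonneg _) (chainProb_le_one s₀ hnn hrow k s)

variable {γ : ℝ} (hnn : ∀ s s', 0 ≤ Pmat s s') (hrow : ∀ s, ∑ s', Pmat s s' = 1)
  (hγ0 : 0 ≤ γ) (hγ1 : γ < 1)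
include hnn hrow hγ0

theorem norm_pow_mul_sum_chainProb_mul_le (k : ℕ) (f : S → ℝ) :
    ‖γ ^ k * ∑ s, chainProb Pmat s₀ k s * f s‖ ≤ γ ^ k * ∑ s, |f s| := by
  rw [Real.norm_eq_abs, abs_mul, abs_of_nonneg (pow_nonneg hγ0 k)]
  exact mul_le_mul_of_nonneg_left (abs_sum_chainProb_mul_le s₀ hnn hrow k f) (pow_nonneg hγ0 k)

include hγ1

theorem summable_pow_mul_sum_chainProb_mul (f : S → ℝ) :
    Summable fun k => γ ^ k * ∑ s, chainProb Pmat s₀ k s * f s :=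
  ((summable_geometric_of_lt_one hγ0 hγ1).mul_right _).of_norm_bounded
    (norm_pow_mul_sum_chainProb_mul_le s₀ hnn hrow hγ0 · f)

theorem tendsto_pow_mul_sum_chainProb_mul (f : S → ℝ) :
    Tendsto (fun k => γ ^ k * ∑ s, chainProb Pmat s₀ k s * f s) atTop (𝓝 0) := by
  refine squeeze_zero_norm (norm_pow_mul_sum_chainProb_mul_le s₀ hnn hrow hγ0 · f) ?_
  simpa using (tendsto_pow_atTop_nhds_zero_of_lt_one hγ0 hγ1).mul_const (∑ s, |f s|)

theorem summable_pow_mul_chainProb (s : S) :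
    Summable fun k => γ ^ k * chainProb Pmat s₀ k s :=
  (summable_geometric_of_lt_one hγ0 hγ1).of_nonneg_of_le
    (fun k => mul_nonneg (pow_nonneg hγ0 k) (chainProb_nonneg s₀ hnn k s))
    (fun k => mul_le_of_le_one_right (pow_nonneg hγ0 k) (chainProb_le_one s₀ hnn hrow k s))

theorem hasSum_pow_mul_sum_chainProb_mul (f : S → ℝ) :
    HasSum (fun k => γ ^ k * ∑ s, chainProb Pmat s₀ k s * f s)
      (∑ s, (∑' k, γ ^ k * chainProb Pmat s₀ k s) * f s) := by
  have := hasSum_sum fun s (_ : s ∈ univ) =>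
    (summable_pow_mul_chainProb s₀ hnn hrow hγ0 hγ1 s).hasSum.mul_right (f s)
  simpa only [mul_sum, mul_assoc] using this

theorem hasSum_pow_mul_sum_chainProb_mul_of_eq_add {Δ g : S → ℝ}
    (hΔ : ∀ s, Δ s = g s + γ * ∑ s', Pmat s s' * Δ s') :
    HasSum (fun k => γ ^ k * ∑ s, chainProb Pmat s₀ k s * g s) (Δ s₀) := by
  have unrolled : ∀ n, ∑ k ∈ range n, γ ^ k * ∑ s, chainProb Pmat s₀ k s * g s =
      Δ s₀ - γ ^ n * ∑ s, chainProb Pmat s₀ n s * Δ s := by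
    intro n
    induction n with
    | zero => simp [chainProb]
    | succ n ih =>
      have step : ∑ s, chainProb Pmat s₀ n s * Δ s = ∑ s, chainProb Pmat s₀ n s * g s +
          γ * ∑ s, chainProb Pmat s₀ (n + 1) s * Δ s := by
        rw [sum_chainProb_succ_mul, mul_sum, ← sum_add_distrib]
        refine sum_congr rfl fun s _ => ?_
        rw [hΔ s]
        ring
      rw [sum_range_succ, ih, step]
      ring
  refine (summable_pow_mul_sum_chainProb_mul s₀ hnn hrow hγ0 hγ1 g).hasSum_iff_tendsto_nat.mpr ?_
  simp only [unrolled]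
  simpa using tendsto_const_nhds.sub (tendsto_pow_mul_sum_chainProb_mul s₀ hnn hrow hγ0 hγ1 Δ)

end MarkovChain

section MDP

variable {S A : Type*} [Fintype A]

def policyTransition (P : S → A → S → ℝ) (π : S → A → ℝ) (s s' : S) : ℝ :=
  ∑ a, π s a * P s a s'

def stateValue (π Q : S → A → ℝ) (s : S) : ℝ :=
  ∑ a, π s a * Q s a

theorem policyTransition_nonneg {P : S → A → S → ℝ} {π : S → A → ℝ}
    (hP : ∀ s a s', 0 ≤ P s a s') (hπ : ∀ s a, 0 ≤ π s a) (s s' : S) :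
    0 ≤ policyTransition P π s s' :=
  sum_nonneg fun a _ => mul_nonneg (hπ s a) (hP s a s')

theorem sum_policyTransition [Fintype S] {P : S → A → S → ℝ} {π : S → A → ℝ}
    (hP : ∀ s a, ∑ s', P s a s' = 1) (hπ : ∀ s, ∑ a, π s a = 1) (s : S) :
    ∑ s', policyTransition P π s s' = 1 := by
  simp only [policyTransition]
  rw [sum_comm]
  simp only [← mul_sum, hP, mul_one, hπ]

theorem stateValue_sub_stateValue_eq [Fintype S] {P : S → A → S → ℝ} {r : S → A → ℝ} {γ : ℝ}
    {π π' Q Q' : S → A → ℝ}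
    (hQ : ∀ s a, Q s a = r s a + γ * ∑ s', P s a s' * stateValue π Q s')
    (hQ' : ∀ s a, Q' s a = r s a + γ * ∑ s', P s a s' * stateValue π' Q' s') (s : S) :
    stateValue π' Q' s - stateValue π Q s = ∑ a, (π' s a - π s a) * Q s a +
      γ * ∑ s', policyTransition P π' s s' * (stateValue π' Q' s' - stateValue π Q s') := by
  have hQ'_sub_Q : ∀ a, Q' s a - Q s a =
      γ * ∑ s', P s a s' * (stateValue π' Q' s' - stateValue π Q s') := by
    intro a
    rw [hQ' s a, hQ s a]
    simp only [mul_sub, sum_sub_distrib]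
    ring
  calc stateValue π' Q' s - stateValue π Q s
      = ∑ a, (π' s a - π s a) * Q s a + ∑ a, π' s a * (Q' s a - Q s a) := by
        simp only [stateValue, sub_mul, mul_sub, sum_sub_distrib]
        ring
    _ = _ := by
        simp only [hQ'_sub_Q, policyTransition, mul_sum, sum_mul]
        rw [sum_comm]
        congr 1
        exact sum_congr rfl fun _ _ => sum_congr rfl fun _ _ => by ring

end MDP

theorem stmt_11_general {S A : Type*} [Fintype S] [Fintype A] [DecidableEq S]
    (P : S → A → S → ℝ) (r : S → A → ℝ) (γ : ℝ)
    (hγ0 : 0 < γ) (hγ1 : γ < 1)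
    (hPnn : ∀ s a s', 0 ≤ P s a s') (hPsum : ∀ s a, ∑ s', P s a s' = 1)
    (π π' : S → A → ℝ)
    (hπ'nn : ∀ s a, 0 ≤ π' s a) (hπ'sum : ∀ s, ∑ a, π' s a = 1)
    (Qπ Qπ' : S → A → ℝ)
    (hQπ : ∀ s a, Qπ s a = r s a + γ * ∑ s', P s a s' * ∑ a', π s' a' * Qπ s' a')
    (hQπ' : ∀ s a, Qπ' s a = r s a + γ * ∑ s', P s a s' * ∑ a', π' s' a' * Qπ' s' a')
    (s₀ : S) :
    (∑ a, π' s₀ a * Qπ' s₀ a) - (∑ a, π s₀ a * Qπ s₀ a) =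
      (1 / (1 - γ)) * ∑ s,
        ((1 - γ) * ∑' k : ℕ,
            γ ^ k * chainProb (fun t t' => ∑ a, π' t a * P t a t') s₀ k s) *
          ∑ a, (π' s a - π s a) * Qπ s a := by
  have hnn := policyTransition_nonneg hPnn hπ'nn
  have hrow := sum_policyTransition hPsum hπ'sum
  have hvalue := hasSum_pow_mul_sum_chainProb_mul_of_eq_add s₀ hnn hrow hγ0.le hγ1
    (stateValue_sub_stateValue_eq hQπ hQπ')
  have hoccupancy := hasSum_pow_mul_sum_chainProb_mul s₀ hnn hrow hγ0.le hγ1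
    fun s => ∑ a, (π' s a - π s a) * Qπ s a
  have hγ : 1 - γ ≠ 0 := by linarith
  refine (hvalue.unique hoccupancy).trans ?_
  simp only [mul_assoc, ← mul_sum, one_div, inv_mul_cancel_left₀ hγ]
  rfl

/-- Performance-difference lemma:
`V^{π'}(s₀) - V^π(s₀) = (1/(1-γ)) ∑_s d^{π'}_{s₀}(s) ⟨π'(s) - π(s), Q^π(s)⟩`,
where `d^{π'}_{s₀}(s) = (1-γ) ∑_k γ^k Pr(s_k = s | s_0 = s₀, π')`. -/
theorem stmt_11 {S A : Type*} [Fintype S] [Fintype A] [DecidableEq S]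
    [Nonempty S] [Nonempty A]
    (P : S → A → S → ℝ) (r : S → A → ℝ) (γ : ℝ)
    (hγ0 : 0 < γ) (hγ1 : γ < 1)
    (hPnn : ∀ s a s', 0 ≤ P s a s') (hPsum : ∀ s a, ∑ s', P s a s' = 1)
    (π π' : S → A → ℝ)
    (hπnn : ∀ s a, 0 ≤ π s a) (hπsum : ∀ s, ∑ a, π s a = 1)
    (hπ'nn : ∀ s a, 0 ≤ π' s a) (hπ'sum : ∀ s, ∑ a, π' s a = 1)
    (Qπ Qπ' : S → A → ℝ)
    (hQπ : ∀ s a, Qπ s a = r s a + γ * ∑ s', P s a s' * ∑ a', π s' a' * Qπ s' a')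
    (hQπ' : ∀ s a, Qπ' s a = r s a + γ * ∑ s', P s a s' * ∑ a', π' s' a' * Qπ' s' a')
    (s₀ : S) :
    (∑ a, π' s₀ a * Qπ' s₀ a) - (∑ a, π s₀ a * Qπ s₀ a) =
      (1 / (1 - γ)) * ∑ s,
        ((1 - γ) * ∑' k : ℕ,
            γ ^ k * chainProb (fun t t' => ∑ a, π' t a * P t a t') s₀ k s) *
          ∑ a, (π' s a - π s a) * Qπ s a :=
  stmt_11_general P r γ hγ0 hγ1 hPnn hPsum π π' hπ'nn hπ'sum Qπ Qπ' hQπ hQπ' s₀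
end

section
/- Let Q ∈ ℝ^{|A|} and π ∈ Δ(A) with regret vector R = Q - ⟨π, Q⟩·𝟏. If [R]^+ ≠ 0 and π̂ = [R]^+ / ‖[R]^+‖₁ is the regret-matching policy, then ⟨π̂ - π, Q⟩ ≥ 0, with strict inequality whenever max_a Q(a) > ⟨π, Q⟩. -/
open Finset

/-! Since `π̂` is a probability vector, `⟨π̂ - π, Q⟩ = ⟨π̂, R⟩ = ∑ ([R]⁺_a)² / ‖[R]⁺‖₁`, which is
positive as soon as some regret is positive. -/

section RegretMatching

variable {ι : Type*} [Fintype ι]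

lemma sum_sub_mul_eq_sum_mul_sub_sum_mul {p π Q : ι → ℝ} (hp : ∑ a, p a = 1) :
    ∑ a, (p a - π a) * Q a = ∑ a, p a * (Q a - ∑ b, π b * Q b) := by
  simp only [sub_mul, mul_sub, sum_sub_distrib, ← sum_mul, hp, one_mul]

noncomputable def regretMatching (R : ι → ℝ) (a : ι) : ℝ :=
  max (R a) 0 / ∑ b, max (R b) 0

lemma max_zero_mul_self_nonneg (r : ℝ) : 0 ≤ max r 0 * r := by
  rcases le_or_gt r 0 with h | h
  · simp [max_eq_right h]
  · exact mul_nonneg (le_max_of_le_left h.le) h.le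

variable {R : ι → ℝ}

lemma sum_max_zero_pos (h : ∃ a, 0 < R a) : 0 < ∑ b, max (R b) 0 := by
  obtain ⟨a, ha⟩ := h
  exact sum_pos' (fun b _ => le_max_right _ _) ⟨a, mem_univ a, lt_max_of_lt_left ha⟩

lemma sum_regretMatching (h : ∃ a, 0 < R a) : ∑ a, regretMatching R a = 1 := by
  simp only [regretMatching, ← sum_div]
  exact div_self (sum_max_zero_pos h).ne'

lemma sum_regretMatching_mul_pos (h : ∃ a, 0 < R a) :
    0 < ∑ a, regretMatching R a * R a := by
  simp only [regretMatching, div_mul_eq_mul_div, ← sum_div]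
  obtain ⟨a, ha⟩ := h
  refine div_pos (sum_pos' (fun b _ => max_zero_mul_self_nonneg (R b)) ⟨a, mem_univ a, ?_⟩)
    (sum_max_zero_pos ⟨a, ha⟩)
  exact mul_pos (lt_max_of_lt_left ha) ha

end RegretMatching

theorem stmt_13_general {A : Type*} [Fintype A]
    (Q : A → ℝ) (π : A → ℝ)
    (R : A → ℝ) (hR : ∀ a, R a = Q a - ∑ b, π b * Q b)
    (hRpos : ∃ a, 0 < max (R a) 0)
    (πhat : A → ℝ) (hπhat : ∀ a, πhat a = max (R a) 0 / ∑ b, max (R b) 0) :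
    (0 ≤ ∑ a, (πhat a - π a) * Q a) ∧
      ((∑ b, π b * Q b) < (⨆ a, Q a) → 0 < ∑ a, (πhat a - π a) * Q a) := by
  have hRpos_exists : ∃ a, 0 < R a := by simpa only [lt_max_iff, lt_irrefl, or_false] using hRpos
  have hπhat_eq : πhat = regretMatching R := funext hπhat
  have hgain : 0 < ∑ a, (πhat a - π a) * Q a := by
    rw [hπhat_eq, sum_sub_mul_eq_sum_mul_sub_sum_mul (sum_regretMatching hRpos_exists)]
    simp only [← hR]
    exact sum_regretMatching_mul_pos hRpos_exists
  exact ⟨hgain.le, fun _ => hgain⟩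

/-- One-step improvement of the regret-matching policy: if the positive-part regret vector
is nonzero and `π̂ = [R]⁺/‖[R]⁺‖₁`, then `⟨π̂ - π, Q⟩ ≥ 0`, strictly whenever
`max_a Q(a) > ⟨π, Q⟩`. -/
theorem stmt_13 {A : Type*} [Fintype A] [Nonempty A]
    (Q : A → ℝ) (π : A → ℝ)
    (hπnn : ∀ a, 0 ≤ π a) (hπsum : ∑ a, π a = 1)
    (R : A → ℝ) (hR : ∀ a, R a = Q a - ∑ b, π b * Q b)
    (hRpos : ∃ a, 0 < max (R a) 0)
    (πhat : A → ℝ) (hπhat : ∀ a, πhat a = max (R a) 0 / ∑ b, max (R b) 0) :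
    (0 ≤ ∑ a, (πhat a - π a) * Q a) ∧
      ((∑ b, π b * Q b) < (⨆ a, Q a) → 0 < ∑ a, (πhat a - π a) * Q a) :=
  stmt_13_general Q π R hR hRpos πhat hπhat
end

section
/- For a finite discounted MDP with rewards bounded by R_max, all Q-functions Q^π satisfy ‖Q^π‖_∞ ≤ R_max/(1-γ), and for any two policies π₁, π₂, ‖Q^{π₁} - Q^{π₂}‖_∞ ≤ (γ R_max/(1-γ)²) · max_s ‖π₁(s) - π₂(s)‖₁; in particular the map π ↦ Q^π is Lipschitz continuous on the product of simplices. -/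
open Finset

/-! The Bellman operator `T^π` maps the sup-norm ball of radius `M` into that of radius
`R_max + γ M`, so `‖Q^π‖_∞ ≤ R_max + γ ‖Q^π‖_∞`. For two policies, splitting
`∑ π₁ Q₁ - ∑ π₂ Q₂ = ∑ (π₁ - π₂) Q₁ + ∑ π₂ (Q₁ - Q₂)` gives
`‖Q₁ - Q₂‖_∞ ≤ γ (‖Q₁‖_∞ L + ‖Q₁ - Q₂‖_∞)` with `L = max_s ‖π₁(s) - π₂(s)‖₁`.
Both self-referential bounds are solved for the sup norm since `γ < 1`. -/

section WeightedSum

variable {ι : Type*} [Fintype ι]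

theorem abs_sum_mul_le_sum_abs_mul {d f : ι → ℝ} {M : ℝ} (hf : ∀ i, |f i| ≤ M) :
    |∑ i, d i * f i| ≤ (∑ i, |d i|) * M :=
  calc |∑ i, d i * f i| ≤ ∑ i, |d i| * |f i| := by
        simpa only [abs_mul] using abs_sum_le_sum_abs (fun i => d i * f i) univ
    _ ≤ ∑ i, |d i| * M := by gcongr with i; exact hf i
    _ = (∑ i, |d i|) * M := (sum_mul _ _ _).symm

theorem abs_sum_mul_le_of_sum_eq_one {w f : ι → ℝ} {M : ℝ} (hw0 : ∀ i, 0 ≤ w i)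
    (hw1 : ∑ i, w i = 1) (hf : ∀ i, |f i| ≤ M) : |∑ i, w i * f i| ≤ M := by
  simpa [abs_of_nonneg (hw0 _), hw1] using abs_sum_mul_le_sum_abs_mul (d := w) hf

end WeightedSum

theorem ciSup_le_div_one_sub_of_le_add_mul {ι : Type*} [Finite ι] [Nonempty ι] {f : ι → ℝ}
    {c γ : ℝ} (hγ : γ < 1) (h : ∀ i, f i ≤ c + γ * ⨆ j, f j) :
    ⨆ i, f i ≤ c / (1 - γ) := by
  have := ciSup_le h
  rw [le_div_iff₀ (by linarith)]
  linarith

namespace MDP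

variable {S A : Type*} [Fintype S] [Fintype A]

def bellman (P : S → A → S → ℝ) (r : S → A → ℝ) (γ : ℝ) (π Q : S → A → ℝ) (s : S) (a : A) :
    ℝ :=
  r s a + γ * ∑ s', P s a s' * ∑ a', π s' a' * Q s' a'

variable {P : S → A → S → ℝ} {r : S → A → ℝ} {γ : ℝ}

theorem abs_bellman_le {π Q : S → A → ℝ} {R M : ℝ} (hγ : 0 ≤ γ)
    (hP0 : ∀ s a s', 0 ≤ P s a s') (hP1 : ∀ s a, ∑ s', P s a s' = 1)
    (hr : ∀ s a, |r s a| ≤ R) (hπ0 : ∀ s a, 0 ≤ π s a) (hπ1 : ∀ s, ∑ a, π s a = 1)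
    (hQ : ∀ s a, |Q s a| ≤ M) (s : S) (a : A) :
    |bellman P r γ π Q s a| ≤ R + γ * M := by
  have hV : ∀ s', |∑ a', π s' a' * Q s' a'| ≤ M := fun s' =>
    abs_sum_mul_le_of_sum_eq_one (hπ0 s') (hπ1 s') (hQ s')
  calc |bellman P r γ π Q s a|
      ≤ |r s a| + γ * |∑ s', P s a s' * ∑ a', π s' a' * Q s' a'| := by
        rw [bellman, ← abs_of_nonneg hγ, ← abs_mul, abs_of_nonneg hγ]
        exact abs_add_le _ _
    _ ≤ R + γ * M := by
        gcongr
        · exact hr s a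
        · exact abs_sum_mul_le_of_sum_eq_one (hP0 s a) (hP1 s a) hV

theorem abs_bellman_sub_bellman_le {π₁ π₂ Q₁ Q₂ : S → A → ℝ} {M L D : ℝ} (hγ : 0 ≤ γ)
    (hP0 : ∀ s a s', 0 ≤ P s a s') (hP1 : ∀ s a, ∑ s', P s a s' = 1)
    (hπ₂0 : ∀ s a, 0 ≤ π₂ s a) (hπ₂1 : ∀ s, ∑ a, π₂ s a = 1)
    (hM : 0 ≤ M) (hQ₁ : ∀ s a, |Q₁ s a| ≤ M) (hL : ∀ s, ∑ a, |π₁ s a - π₂ s a| ≤ L)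
    (hD : ∀ s a, |Q₁ s a - Q₂ s a| ≤ D) (s : S) (a : A) :
    |bellman P r γ π₁ Q₁ s a - bellman P r γ π₂ Q₂ s a| ≤ γ * (M * L + D) := by
  have hsplit : ∀ s', ∑ a', π₁ s' a' * Q₁ s' a' - ∑ a', π₂ s' a' * Q₂ s' a' =
      ∑ a', (π₁ s' a' - π₂ s' a') * Q₁ s' a' + ∑ a', π₂ s' a' * (Q₁ s' a' - Q₂ s' a') := by
    intro s'
    rw [← sum_add_distrib, ← sum_sub_distrib]
    exact sum_congr rfl fun a' _ => by ring
  have hV : ∀ s', |∑ a', π₁ s' a' * Q₁ s' a' - ∑ a', π₂ s' a' * Q₂ s' a'| ≤ M * L + D := by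
    intro s'
    rw [hsplit]
    refine (abs_add_le _ _).trans (add_le_add ?_ ?_)
    · calc _ ≤ (∑ a', |π₁ s' a' - π₂ s' a'|) * M := abs_sum_mul_le_sum_abs_mul (hQ₁ s')
        _ ≤ L * M := by gcongr; exact hL s'
        _ = M * L := mul_comm _ _
    · exact abs_sum_mul_le_of_sum_eq_one (hπ₂0 s') (hπ₂1 s') (hD s')
  have hdiff : bellman P r γ π₁ Q₁ s a - bellman P r γ π₂ Q₂ s a = γ * ∑ s', P s a s' *
      (∑ a', π₁ s' a' * Q₁ s' a' - ∑ a', π₂ s' a' * Q₂ s' a') := by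
    simp only [bellman, mul_sub, sum_sub_distrib]
    ring
  rw [hdiff, abs_mul, abs_of_nonneg hγ]
  gcongr
  exact abs_sum_mul_le_of_sum_eq_one (hP0 s a) (hP1 s a) hV

end MDP

open MDP in
/-- Boundedness and Lipschitz continuity of `π ↦ Q^π`: all action-value functions are
bounded by `R_max/(1-γ)` in sup norm, and
`‖Q^{π₁} - Q^{π₂}‖_∞ ≤ (γ R_max/(1-γ)²) max_s ‖π₁(s) - π₂(s)‖₁`. -/
theorem stmt_17 {S A : Type*} [Fintype S] [Fintype A] [Nonempty S] [Nonempty A]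
    (P : S → A → S → ℝ) (r : S → A → ℝ) (γ : ℝ)
    (hγ0 : 0 < γ) (hγ1 : γ < 1)
    (hPnn : ∀ s a s', 0 ≤ P s a s') (hPsum : ∀ s a, ∑ s', P s a s' = 1)
    (Rmax : ℝ) (hr : ∀ s a, |r s a| ≤ Rmax)
    (π₁ π₂ : S → A → ℝ)
    (hπ₁nn : ∀ s a, 0 ≤ π₁ s a) (hπ₁sum : ∀ s, ∑ a, π₁ s a = 1)
    (hπ₂nn : ∀ s a, 0 ≤ π₂ s a) (hπ₂sum : ∀ s, ∑ a, π₂ s a = 1)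
    (Q₁ Q₂ : S → A → ℝ)
    (hQ₁ : ∀ s a, Q₁ s a = r s a + γ * ∑ s', P s a s' * ∑ a', π₁ s' a' * Q₁ s' a')
    (hQ₂ : ∀ s a, Q₂ s a = r s a + γ * ∑ s', P s a s' * ∑ a', π₂ s' a' * Q₂ s' a') :
    (∀ s a, |Q₁ s a| ≤ Rmax / (1 - γ)) ∧
    (⨆ p : S × A, |Q₁ p.1 p.2 - Q₂ p.1 p.2|) ≤
      (γ * Rmax / (1 - γ) ^ 2) * ⨆ s, ∑ a, |π₁ s a - π₂ s a| := by
  set M := ⨆ p : S × A, |Q₁ p.1 p.2|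
  set L := ⨆ s, ∑ a, |π₁ s a - π₂ s a|
  have hQ₁M : ∀ s a, |Q₁ s a| ≤ M := fun s a =>
    le_ciSup (f := fun p : S × A => |Q₁ p.1 p.2|) (Finite.bddAbove_range _) (s, a)
  have hL : ∀ s, ∑ a, |π₁ s a - π₂ s a| ≤ L := le_ciSup (Finite.bddAbove_range _)
  have hM0 : 0 ≤ M := Real.iSup_nonneg fun _ => abs_nonneg _
  have hL0 : 0 ≤ L := Real.iSup_nonneg fun _ => sum_nonneg fun _ _ => abs_nonneg _
  have hMR : M ≤ Rmax / (1 - γ) := ciSup_le_div_one_sub_of_le_add_mul hγ1 fun p => by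
    rw [hQ₁ p.1 p.2]
    exact abs_bellman_le hγ0.le hPnn hPsum hr hπ₁nn hπ₁sum hQ₁M p.1 p.2
  refine ⟨fun s a => (hQ₁M s a).trans hMR, ?_⟩
  have hD : ⨆ p : S × A, |Q₁ p.1 p.2 - Q₂ p.1 p.2| ≤ γ * M * L / (1 - γ) :=
    ciSup_le_div_one_sub_of_le_add_mul hγ1 fun p => by
      rw [hQ₁ p.1 p.2, hQ₂ p.1 p.2]
      refine (abs_bellman_sub_bellman_le hγ0.le hPnn hPsum hπ₂nn hπ₂sum hM0 hQ₁M hL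
        (fun s a => le_ciSup (f := fun p : S × A => |Q₁ p.1 p.2 - Q₂ p.1 p.2|)
          (Finite.bddAbove_range _) (s, a)) p.1 p.2).trans_eq (by ring)
  have h1γ : 0 < 1 - γ := by linarith
  calc _ ≤ γ * M * L / (1 - γ) := hD
    _ ≤ γ * (Rmax / (1 - γ)) * L / (1 - γ) := by gcongr
    _ = γ * Rmax / (1 - γ) ^ 2 * L := by field_simp
end
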